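/- arXiv:2508.14673 — 6 statements merged into one kernel-verified Lean document; each statement's English description precedes it below -/
import Mathlib

section
/- For all fixed λ ∈ [0, π/2), the function φ ↦ β(λ, φ) := φ - 2·arctan((cos(λ/2)·sin φ)/(sin(λ/2) + cos(λ/2)·cos φ)), considered modulo 2π, is strictly decreasing on the open interval (0, 2π). -/
open Real Set
set_option linter.unusedSectionVars false

noncomputable def beta (lam phi : ℝ) : ℝ :=
  phi - 2 * Real.arctan ((Real.cos (lam / 2) * Real.sin phi) /
    (Real.sin (lam / 2) + Real.cos (lam / 2) * Real.cos phi))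

noncomputable def delta (lam phi : ℝ) : ℝ :=
  Real.pi - 2 * Real.arctan (Real.sin phi * Real.tan lam)

/-- Congruence modulo `2π`. -/
def Cong2Pi (x y : ℝ) : Prop := ∃ k : ℤ, x = y + 2 * Real.pi * k

noncomputable def kk (s c : ℝ) : ℝ := (c - s) / (c + s)
noncomputable def AA (s c phi : ℝ) : ℝ := Real.arctan (kk s c * Real.tan (phi / 2))
noncomputable def ph1 (s c : ℝ) : ℝ := Real.arccos (-(s / c))

noncomputable def gg (s c phi : ℝ) : ℝ :=
  if phi < ph1 s c then -2 * AA s c phi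
  else if phi = ph1 s c then ph1 s c - 2 * π
  else if phi < π then -2 * AA s c phi - 2 * π
  else if phi = π then -3 * π
  else if phi < 2 * π - ph1 s c then -2 * AA s c phi - 4 * π
  else if phi = 2 * π - ph1 s c then 2 * π - ph1 s c - 6 * π
  else -2 * AA s c phi - 6 * π

section
variable {s c : ℝ} (hs : 0 ≤ s) (hc : 0 < c) (hsc : s < c)

include hs hc hsc

lemma kk_pos : 0 < kk s c := div_pos (by linarith) (by linarith)

lemma ph1_ge : π / 2 ≤ ph1 s c := by
  rw [ph1, Real.arccos_eq_pi_div_two_sub_arcsin]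
  have : Real.arcsin (-(s / c)) ≤ 0 :=
    Real.arcsin_nonpos.2 (neg_nonpos.2 (div_nonneg hs hc.le))
  linarith

lemma ph1_lt : ph1 s c < π := by
  refine lt_of_le_of_ne (Real.arccos_le_pi _) fun h => ?_
  have := Real.arccos_eq_pi.1 h
  have hlt : -(s / c) > -1 := by
    have : s / c < 1 := (div_lt_one hc).2 hsc
    linarith
  linarith

lemma cos_ph1 : Real.cos (ph1 s c) = -(s / c) := by
  apply Real.cos_arccos
  · have : s / c < 1 := (div_lt_one hc).2 hsc
    linarith
  · have : 0 ≤ s / c := div_nonneg hs hc.le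
    linarith

lemma tan_half_ph1_pos : 0 < Real.tan (ph1 s c / 2) := by
  apply Real.tan_pos_of_pos_of_lt_pi_div_two
  · linarith [ph1_ge hs hc hsc, pi_pos]
  · linarith [ph1_lt hs hc hsc]

lemma kk_tan_sq : kk s c * Real.tan (ph1 s c / 2) ^ 2 = 1 := by
  have hC : 0 < Real.cos (ph1 s c / 2) := by
    apply Real.cos_pos_of_mem_Ioo
    constructor
    · linarith [ph1_ge hs hc hsc, pi_pos]
    · linarith [ph1_lt hs hc hsc]
  have hcos : Real.cos (ph1 s c) = Real.cos (ph1 s c / 2) ^ 2 - Real.sin (ph1 s c / 2) ^ 2 := by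
    rw [← Real.cos_two_mul']; ring_nf
  have hpy := Real.sin_sq_add_cos_sq (ph1 s c / 2)
  have h1 := cos_ph1 hs hc hsc
  rw [h1] at hcos
  -- c * (C^2 - S^2) = -s  →  (c+s) C^2 = (c-s) S^2
  have key : (c + s) * Real.cos (ph1 s c / 2) ^ 2 = (c - s) * Real.sin (ph1 s c / 2) ^ 2 := by
    have : c * (Real.cos (ph1 s c / 2) ^ 2 - Real.sin (ph1 s c / 2) ^ 2) = -s := by
      rw [← hcos]; field_simp
    nlinarith [this, hpy]
  rw [kk, Real.tan_eq_sin_div_cos]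
  field_simp
  linarith [key]

lemma AA_ph1 : AA s c (ph1 s c) = π / 2 - ph1 s c / 2 := by
  have hT := tan_half_ph1_pos hs hc hsc
  have hsq := kk_tan_sq hs hc hsc
  have hkt : kk s c * Real.tan (ph1 s c / 2) = (Real.tan (ph1 s c / 2))⁻¹ := by
    field_simp
    nlinarith [hsq]
  rw [AA, hkt, Real.arctan_inv_of_pos hT, Real.arctan_tan]
  · linarith [ph1_ge hs hc hsc, pi_pos]
  · linarith [ph1_lt hs hc hsc]

lemma AA_ph2 : AA s c (2 * π - ph1 s c) = ph1 s c / 2 - π / 2 := by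
  have : (2 * π - ph1 s c) / 2 = π - ph1 s c / 2 := by ring
  rw [AA, this, Real.tan_pi_sub, mul_neg, Real.arctan_neg]
  have := AA_ph1 hs hc hsc
  rw [AA] at this
  rw [this]; ring

lemma AA_mono1 {x y : ℝ} (hx : 0 < x) (hxy : x < y) (hy : y < π) : AA s c x < AA s c y := by
  apply Real.arctan_strictMono
  apply mul_lt_mul_of_pos_left _ (kk_pos hs hc hsc)
  apply Real.strictMonoOn_tan
  · constructor <;> [linarith [pi_pos]; linarith]
  · constructor <;> [linarith [pi_pos]; linarith]
  · linarith

lemma AA_mono2 {x y : ℝ} (hx : π < x) (hxy : x < y) (hy : y < 2 * π) : AA s c x < AA s c y := by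
  have e1 : Real.tan (x / 2) = Real.tan (x / 2 - π) := by
    rw [← Real.tan_periodic (x / 2 - π)]; ring_nf
  have e2 : Real.tan (y / 2) = Real.tan (y / 2 - π) := by
    rw [← Real.tan_periodic (y / 2 - π)]; ring_nf
  unfold AA
  apply Real.arctan_strictMono
  apply mul_lt_mul_of_pos_left _ (kk_pos hs hc hsc)
  rw [e1, e2]
  apply Real.strictMonoOn_tan
  · constructor <;> [linarith; linarith [pi_pos]]
  · constructor <;> [linarith; linarith [pi_pos]]
  · linarith

lemma AA_pos {x : ℝ} (hx : 0 < x) (hx2 : x < π) : 0 < AA s c x := by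
  rw [AA, ← Real.arctan_zero]
  apply Real.arctan_strictMono
  apply mul_pos (kk_pos hs hc hsc)
  exact Real.tan_pos_of_pos_of_lt_pi_div_two (by linarith) (by linarith)

lemma AA_neg {x : ℝ} (hx : π < x) (hx2 : x < 2 * π) : AA s c x < 0 := by
  rw [AA, ← Real.arctan_zero]
  apply Real.arctan_strictMono
  have e1 : Real.tan (x / 2) = Real.tan (x / 2 - π) := by
    rw [← Real.tan_periodic (x / 2 - π)]; ring_nf
  rw [e1]
  have ht : Real.tan (x / 2 - π) < 0 := by
    rw [← neg_neg (x / 2 - π), Real.tan_neg, neg_lt_zero]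
    exact Real.tan_pos_of_pos_of_lt_pi_div_two (by linarith) (by linarith)
  have := kk_pos hs hc hsc
  nlinarith

lemma AA_lt : AA s c x < π / 2 := Real.arctan_lt_pi_div_two _

lemma AA_gt : -(π / 2) < AA s c x := Real.neg_pi_div_two_lt_arctan _

/-- The key tangent identity. -/
lemma tan_psi {phi : ℝ} (h1 : Real.cos (phi / 2) ≠ 0) (h2 : s + c * Real.cos phi ≠ 0) :
    Real.tan (phi / 2 + AA s c phi) = c * Real.sin phi / (s + c * Real.cos phi) := by
  set T := Real.tan (phi / 2) with hT
  have hcA : 0 < Real.cos (AA s c phi) := Real.cos_arctan_pos _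
  have htA : Real.tan (AA s c phi) = kk s c * T := Real.tan_arctan _
  have hsinA : Real.sin (AA s c phi) = kk s c * T * Real.cos (AA s c phi) := by
    rw [← htA, Real.tan_eq_sin_div_cos]; field_simp
  have hsh : Real.sin (phi / 2) = T * Real.cos (phi / 2) := by
    rw [hT, Real.tan_eq_sin_div_cos]; field_simp
  have hsin : Real.sin phi = 2 * (T * Real.cos (phi / 2)) * Real.cos (phi / 2) := by
    rw [← hsh, ← Real.sin_two_mul]; ring_nf
  have hcos : Real.cos phi = Real.cos (phi / 2) ^ 2 - (T * Real.cos (phi / 2)) ^ 2 := by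
    rw [← hsh, ← Real.cos_two_mul']; ring_nf
  have hcs : c + s ≠ 0 := by linarith
  have hfact : s + c * Real.cos phi =
      (c + s) * Real.cos (phi / 2) ^ 2 * (1 - kk s c * T ^ 2) := by
    have hpy : Real.sin (phi / 2) ^ 2 + Real.cos (phi / 2) ^ 2 = 1 :=
      Real.sin_sq_add_cos_sq _
    have hS2 : T ^ 2 * Real.cos (phi / 2) ^ 2 = 1 - Real.cos (phi / 2) ^ 2 := by
      have h' : (T * Real.cos (phi / 2)) ^ 2 = Real.sin (phi / 2) ^ 2 := by rw [← hsh]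
      nlinarith [h', hpy]
    rw [hcos, kk]
    field_simp
    linear_combination (-s) * hS2
  have hD : (1 : ℝ) - kk s c * T ^ 2 ≠ 0 := by
    intro h0
    rw [hfact, h0] at h2
    simp at h2
  have hk1 : (1 : ℝ) + kk s c = 2 * c / (c + s) := by rw [kk]; field_simp; ring
  have hden : Real.cos (phi / 2 + AA s c phi) =
      Real.cos (AA s c phi) * Real.cos (phi / 2) * (1 - kk s c * T ^ 2) := by
    rw [Real.cos_add, hsinA, hsh]; ring
  have hnum : Real.sin (phi / 2 + AA s c phi) =
      Real.cos (AA s c phi) * Real.cos (phi / 2) * (T * (1 + kk s c)) := by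
    rw [Real.sin_add, hsinA, hsh]; ring
  rw [Real.tan_eq_sin_div_cos, hnum, hden, hfact, hsin, hk1]
  field_simp

/-- The arctan formula on good regions. -/
lemma arctan_u {phi : ℝ} (m : ℤ) (h1 : Real.cos (phi / 2) ≠ 0)
    (h2 : s + c * Real.cos phi ≠ 0)
    (hb1 : -(π / 2) < phi / 2 + AA s c phi - m * π)
    (hb2 : phi / 2 + AA s c phi - m * π < π / 2) :
    Real.arctan (c * Real.sin phi / (s + c * Real.cos phi)) =
      phi / 2 + AA s c phi - m * π := by
  have hper : Real.tan (phi / 2 + AA s c phi - m * π) = Real.tan (phi / 2 + AA s c phi) := by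
    have := (Real.tan_periodic.int_mul m).sub_eq (phi / 2 + AA s c phi)
    simpa [mul_comm] using this
  rw [← tan_psi hs hc hsc h1 h2, ← hper, Real.arctan_tan hb1 hb2]

lemma gg_eval1 {x : ℝ} (h : x < ph1 s c) : gg s c x = -2 * AA s c x := by
  rw [gg, if_pos h]

lemma gg_evalp1 : gg s c (ph1 s c) = ph1 s c - 2 * π := by
  rw [gg, if_neg (lt_irrefl _), if_pos rfl]

lemma gg_eval2 {x : ℝ} (h1 : ph1 s c < x) (h2 : x < π) :
    gg s c x = -2 * AA s c x - 2 * π := by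
  rw [gg, if_neg (by linarith), if_neg (by linarith), if_pos h2]

lemma gg_evalp2 : gg s c π = -3 * π := by
  have hpπ := ph1_lt hs hc hsc
  rw [gg, if_neg (by linarith), if_neg (by linarith), if_neg (lt_irrefl _), if_pos rfl]

lemma gg_eval3 {x : ℝ} (h1 : π < x) (h2 : x < 2 * π - ph1 s c) :
    gg s c x = -2 * AA s c x - 4 * π := by
  have hpπ := ph1_lt hs hc hsc
  rw [gg, if_neg (by linarith), if_neg (by linarith), if_neg (by linarith),
    if_neg (by linarith), if_pos h2]

lemma gg_evalp3 : gg s c (2 * π - ph1 s c) = 2 * π - ph1 s c - 6 * π := by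
  have hpπ := ph1_lt hs hc hsc
  have hp2 := ph1_ge hs hc hsc
  have hpi := pi_pos
  rw [gg, if_neg (by linarith), if_neg (by intro h; linarith), if_neg (by linarith),
    if_neg (by intro h; linarith), if_neg (lt_irrefl _), if_pos rfl]

lemma gg_eval4 {x : ℝ} (h1 : 2 * π - ph1 s c < x) :
    gg s c x = -2 * AA s c x - 6 * π := by
  have hpπ := ph1_lt hs hc hsc
  have hp2 := ph1_ge hs hc hsc
  have hpi := pi_pos
  rw [gg, if_neg (by linarith), if_neg (by intro h; linarith), if_neg (by linarith),
    if_neg (by intro h; linarith), if_neg (by linarith), if_neg (by intro h; linarith)]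

lemma gg_anti : StrictAntiOn (gg s c) (Ioo 0 (2 * π)) := by
  have hpπ := ph1_lt hs hc hsc
  have hp2 := ph1_ge hs hc hsc
  have hpi := pi_pos
  have hA1 := AA_ph1 hs hc hsc
  have hA2 := AA_ph2 hs hc hsc
  have S1 : StrictAntiOn (gg s c) (Ioc 0 (ph1 s c)) := by
    rintro x ⟨hx0, hx1⟩ y ⟨hy0, hy1⟩ hxy
    have hxp : x < ph1 s c := lt_of_lt_of_le hxy hy1
    rw [gg_eval1 hs hc hsc hxp]
    rcases eq_or_lt_of_le hy1 with rfl | hy1'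
    · rw [gg_evalp1 hs hc hsc]
      have hA := AA_mono1 hs hc hsc hx0 hxp hpπ
      rw [hA1] at hA
      linarith
    · rw [gg_eval1 hs hc hsc hy1']
      have := AA_mono1 hs hc hsc hx0 hxy (by linarith)
      linarith
  have S2 : StrictAntiOn (gg s c) (Icc (ph1 s c) π) := by
    rintro x ⟨hx1, hx2⟩ y ⟨hy1, hy2⟩ hxy
    have hyp : ph1 s c < y := lt_of_le_of_lt hx1 hxy
    rcases eq_or_lt_of_le hx1 with rfl | hx1'
    · rw [gg_evalp1 hs hc hsc]
      rcases eq_or_lt_of_le hy2 with rfl | hy2'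
      · rw [gg_evalp2 hs hc hsc]; linarith
      · rw [gg_eval2 hs hc hsc hyp hy2']
        have hA := AA_mono1 hs hc hsc (by linarith) hxy hy2'
        rw [hA1] at hA
        linarith
    · rw [gg_eval2 hs hc hsc hx1' (lt_of_lt_of_le hxy hy2)]
      rcases eq_or_lt_of_le hy2 with rfl | hy2'
      · rw [gg_evalp2 hs hc hsc]
        have := AA_lt hs hc hsc (x := x)
        linarith
      · rw [gg_eval2 hs hc hsc hyp hy2']
        have := AA_mono1 hs hc hsc (by linarith) hxy hy2'
        linarith
  have S3 : StrictAntiOn (gg s c) (Icc π (2 * π - ph1 s c)) := by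
    rintro x ⟨hx1, hx2⟩ y ⟨hy1, hy2⟩ hxy
    have hyπ : π < y := lt_of_le_of_lt hx1 hxy
    rcases eq_or_lt_of_le hx1 with rfl | hx1'
    · rw [gg_evalp2 hs hc hsc]
      rcases eq_or_lt_of_le hy2 with rfl | hy2'
      · rw [gg_evalp3 hs hc hsc]; linarith
      · rw [gg_eval3 hs hc hsc hyπ hy2']
        have := AA_gt hs hc hsc (x := y)
        linarith
    · rw [gg_eval3 hs hc hsc hx1' (lt_of_lt_of_le hxy hy2)]
      rcases eq_or_lt_of_le hy2 with rfl | hy2'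
      · rw [gg_evalp3 hs hc hsc]
        have hA := AA_mono2 hs hc hsc hx1' hxy (by linarith)
        rw [hA2] at hA
        linarith
      · rw [gg_eval3 hs hc hsc hyπ hy2']
        have := AA_mono2 hs hc hsc hx1' hxy (by linarith)
        linarith
  have S4 : StrictAntiOn (gg s c) (Ico (2 * π - ph1 s c) (2 * π)) := by
    rintro x ⟨hx1, hx2⟩ y ⟨hy1, hy2⟩ hxy
    have hyq : 2 * π - ph1 s c < y := lt_of_le_of_lt hx1 hxy
    rw [gg_eval4 hs hc hsc hyq]
    rcases eq_or_lt_of_le hx1 with rfl | hx1'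
    · rw [gg_evalp3 hs hc hsc]
      have hA := AA_mono2 hs hc hsc (by linarith) hxy hy2
      rw [hA2] at hA
      linarith
    · rw [gg_eval4 hs hc hsc hx1']
      have := AA_mono2 hs hc hsc (by linarith) hxy hy2
      linarith
  have U1 : StrictAntiOn (gg s c) (Ioc 0 π) := by
    have h := S1.union S2 ⟨⟨by linarith, le_rfl⟩, fun z hz => hz.2⟩
      ⟨⟨le_rfl, hpπ.le⟩, fun z hz => hz.1⟩
    rwa [Set.Ioc_union_Icc_eq_Ioc (by linarith) hpπ.le] at h
  have U2 : StrictAntiOn (gg s c) (Ioc 0 (2 * π - ph1 s c)) := by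
    have h := U1.union S3 ⟨⟨by linarith, le_rfl⟩, fun z hz => hz.2⟩
      ⟨⟨le_rfl, by linarith⟩, fun z hz => hz.1⟩
    rwa [Set.Ioc_union_Icc_eq_Ioc (by linarith) (by linarith)] at h
  have U3 := U2.union S4 ⟨⟨by linarith, le_rfl⟩, fun z hz => hz.2⟩
    ⟨⟨le_rfl, by linarith⟩, fun z hz => hz.1⟩
  rwa [Set.Ioc_union_Ico_eq_Ioo (by linarith) (by linarith)] at U3

end

/-- For fixed λ ∈ [0, π/2), β(λ, ·) considered modulo 2π is strictly decreasing
on (0, 2π): there is a strictly decreasing lift agreeing with β modulo 2π. -/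
theorem beta_strictAnti_mod (lam : ℝ) (hlam : lam ∈ Set.Ico 0 (Real.pi / 2)) :
    ∃ g : ℝ → ℝ, StrictAntiOn g (Set.Ioo 0 (2 * Real.pi)) ∧
      ∀ phi ∈ Set.Ioo 0 (2 * Real.pi), Cong2Pi (g phi) (beta lam phi) := by
  obtain ⟨hlam0, hlam1⟩ := hlam
  have hpi := pi_pos
  set s := Real.sin (lam / 2) with hs_def
  set c := Real.cos (lam / 2) with hc_def
  have hs : 0 ≤ s := Real.sin_nonneg_of_nonneg_of_le_pi (by linarith) (by linarith)
  have hc : 0 < c := Real.cos_pos_of_mem_Ioo ⟨by linarith, by linarith⟩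
  have hsc : s < c := by
    have h1 : s < Real.sin (π / 4) :=
      Real.sin_lt_sin_of_lt_of_le_pi_div_two (by linarith) (by linarith) (by linarith)
    have h2 : Real.cos (π / 4) < c :=
      Real.cos_lt_cos_of_nonneg_of_le_pi (by linarith) (by linarith) (by linarith)
    rw [Real.sin_pi_div_four] at h1
    rw [Real.cos_pi_div_four] at h2
    linarith
  have hpπ := ph1_lt hs hc hsc
  have hp2 := ph1_ge hs hc hsc
  have hA1 := AA_ph1 hs hc hsc
  have hA2 := AA_ph2 hs hc hsc
  have hcp : c * Real.cos (ph1 s c) = -s := by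
    rw [cos_ph1 hs hc hsc]; field_simp
  refine ⟨gg s c, gg_anti hs hc hsc, ?_⟩
  intro phi hphi
  obtain ⟨hphi0, hphi2⟩ := hphi
  have hbeta : beta lam phi =
      phi - 2 * Real.arctan (c * Real.sin phi / (s + c * Real.cos phi)) := rfl
  rcases lt_trichotomy phi (ph1 s c) with h | h | h
  · -- region 1
    have h1 : Real.cos (phi / 2) ≠ 0 :=
      (Real.cos_pos_of_mem_Ioo ⟨by linarith, by linarith⟩).ne'
    have hcos : Real.cos (ph1 s c) < Real.cos phi :=
      Real.cos_lt_cos_of_nonneg_of_le_pi hphi0.le hpπ.le h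
    have h2 : 0 < s + c * Real.cos phi := by nlinarith
    have hAp : 0 < AA s c phi := AA_pos hs hc hsc hphi0 (by linarith)
    have hAm : AA s c phi < AA s c (ph1 s c) := AA_mono1 hs hc hsc hphi0 h hpπ
    rw [hA1] at hAm
    have harc := arctan_u hs hc hsc 0 h1 h2.ne'
      (by push_cast; linarith) (by push_cast; linarith)
    refine ⟨0, ?_⟩
    rw [gg_eval1 hs hc hsc h, hbeta, harc]
    push_cast; ring
  · -- at ph1
    subst h  -- phi = ph1? h : phi = ph1 s c
    refine ⟨-1, ?_⟩
    rw [gg_evalp1 hs hc hsc, hbeta]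
    rw [show s + c * Real.cos (ph1 s c) = 0 by linarith, div_zero, Real.arctan_zero]
    push_cast; ring
  · rcases lt_trichotomy phi π with h' | h' | h'
    · -- region 2
      have h1 : Real.cos (phi / 2) ≠ 0 :=
        (Real.cos_pos_of_mem_Ioo ⟨by linarith, by linarith⟩).ne'
      have hcos : Real.cos phi < Real.cos (ph1 s c) :=
        Real.cos_lt_cos_of_nonneg_of_le_pi (by linarith) h'.le h
      have h2 : s + c * Real.cos phi < 0 := by nlinarith
      have hAu : AA s c phi < π / 2 := AA_lt hs hc hsc
      have hAm : AA s c (ph1 s c) < AA s c phi := AA_mono1 hs hc hsc (by linarith) h h'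
      rw [hA1] at hAm
      have harc := arctan_u hs hc hsc 1 h1 h2.ne
        (by push_cast; linarith) (by push_cast; linarith)
      refine ⟨-2, ?_⟩
      rw [gg_eval2 hs hc hsc h h', hbeta, harc]
      push_cast; ring
    · -- phi = π
      subst h'
      refine ⟨-2, ?_⟩
      rw [gg_evalp2 hs hc hsc, hbeta, Real.sin_pi, mul_zero, zero_div, Real.arctan_zero]
      push_cast; ring
    · rcases lt_trichotomy phi (2 * π - ph1 s c) with h'' | h'' | h''
      · -- region 3
        have h1 : Real.cos (phi / 2) ≠ 0 :=
          (Real.cos_neg_of_pi_div_two_lt_of_lt (by linarith) (by linarith)).ne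
        have hcc : Real.cos phi = Real.cos (2 * π - phi) := (Real.cos_two_pi_sub phi).symm
        have hcos : Real.cos (2 * π - phi) < Real.cos (ph1 s c) :=
          Real.cos_lt_cos_of_nonneg_of_le_pi (by linarith) (by linarith) (by linarith)
        rw [← hcc] at hcos
        have h2 : s + c * Real.cos phi < 0 := by nlinarith
        have hAg : -(π / 2) < AA s c phi := AA_gt hs hc hsc
        have hAm : AA s c phi < AA s c (2 * π - ph1 s c) :=
          AA_mono2 hs hc hsc h' h'' (by linarith)
        rw [hA2] at hAm
        have harc := arctan_u hs hc hsc 0 h1 h2.ne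
          (by push_cast; linarith) (by push_cast; linarith)
        refine ⟨-2, ?_⟩
        rw [gg_eval3 hs hc hsc h' h'', hbeta, harc]
        push_cast; ring
      · -- at 2π - ph1
        subst h''  -- careful direction
        refine ⟨-3, ?_⟩
        have hcq : Real.cos (2 * π - ph1 s c) = Real.cos (ph1 s c) :=
          Real.cos_two_pi_sub _
        rw [gg_evalp3 hs hc hsc, hbeta, hcq,
          show s + c * Real.cos (ph1 s c) = 0 by linarith, div_zero, Real.arctan_zero]
        push_cast; ring
      · -- region 4
        have h1 : Real.cos (phi / 2) ≠ 0 :=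
          (Real.cos_neg_of_pi_div_two_lt_of_lt (by linarith) (by linarith)).ne
        have hcc : Real.cos phi = Real.cos (2 * π - phi) := (Real.cos_two_pi_sub phi).symm
        have hcos : Real.cos (ph1 s c) < Real.cos (2 * π - phi) :=
          Real.cos_lt_cos_of_nonneg_of_le_pi (by linarith) hpπ.le (by linarith)
        rw [← hcc] at hcos
        have h2 : 0 < s + c * Real.cos phi := by nlinarith
        have hAn : AA s c phi < 0 := AA_neg hs hc hsc h' hphi2
        have hAm : AA s c (2 * π - ph1 s c) < AA s c phi :=
          AA_mono2 hs hc hsc (by linarith) h'' hphi2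
        rw [hA2] at hAm
        have harc := arctan_u hs hc hsc 1 h1 h2.ne'
          (by push_cast; linarith) (by push_cast; linarith)
        refine ⟨-4, ?_⟩
        rw [gg_eval4 hs hc hsc h'', hbeta, harc]
        push_cast; ring
end

section
/- For all λ ∈ [0, π/2) and φ ∈ [0, 2π), β(λ, φ) ≡ 0 (mod 2π) if and only if φ = 0. -/
open Real Set

lemma key_aux (lam phi : ℝ) (hc : 0 < Real.cos (lam/2))
    (hsc : Real.sin (lam/2) < Real.cos (lam/2))
    (hc' : Real.cos (phi/2) ≠ 0)
    (h : Real.tan (phi/2) = (Real.cos (lam/2) * Real.sin phi) /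
      (Real.sin (lam/2) + Real.cos (lam/2) * Real.cos phi)) :
    Real.sin (phi/2) = 0 := by
  have hsin : Real.sin phi = 2 * Real.sin (phi/2) * Real.cos (phi/2) := by
    rw [show phi = 2 * (phi/2) by ring, Real.sin_two_mul]; ring_nf
  have hcos : Real.cos phi = 2 * Real.cos (phi/2)^2 - 1 := by
    rw [show phi = 2 * (phi/2) by ring, Real.cos_two_mul]; ring_nf
  rw [Real.tan_eq_sin_div_cos, hsin, hcos] at h
  rcases eq_or_ne (Real.sin (lam/2) + Real.cos (lam/2) * (2 * Real.cos (phi/2)^2 - 1)) 0 with hD | hD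
  · rw [hD, div_zero, div_eq_zero_iff] at h
    tauto
  · field_simp at h
    have h3 : Real.sin (phi/2) * (Real.sin (lam/2) - Real.cos (lam/2)) = 0 := by
      linear_combination h
    rcases mul_eq_zero.mp h3 with h4 | h4
    · exact h4
    · linarith

theorem beta_eq_zero_iff (lam : ℝ) (hlam : lam ∈ Set.Ico 0 (Real.pi / 2))
    (phi : ℝ) (hphi : phi ∈ Set.Ico 0 (2 * Real.pi)) :
    Cong2Pi (beta lam phi) 0 ↔ phi = 0 := by
  obtain ⟨hl0, hl1⟩ := hlam
  obtain ⟨hp0, hp1⟩ := hphi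
  have hpi := Real.pi_pos
  constructor
  · rintro ⟨k, hk⟩
    set X := (Real.cos (lam / 2) * Real.sin phi) /
      (Real.sin (lam / 2) + Real.cos (lam / 2) * Real.cos phi) with hX
    have ha1 : Real.arctan X < Real.pi / 2 := Real.arctan_lt_pi_div_two X
    have ha2 : -(Real.pi/2) < Real.arctan X := Real.neg_pi_div_two_lt_arctan X
    have hbeta : phi - 2 * Real.arctan X = 2 * Real.pi * k := by
      simpa [beta] using hk
    -- bounds on k
    have hk01 : k = 0 ∨ k = 1 := by
      have h1 : (-1 : ℝ) < k := by nlinarith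
      have h2 : (k : ℝ) < 2 := by nlinarith
      have h1' : (-1 : ℤ) < k := by exact_mod_cast h1
      have h2' : k < 2 := by exact_mod_cast h2
      omega
    -- common facts
    have hc : 0 < Real.cos (lam/2) := by
      apply Real.cos_pos_of_mem_Ioo
      constructor <;> [linarith; linarith]
    have hsc : Real.sin (lam/2) < Real.cos (lam/2) := by
      have h1 : Real.sin (lam/2) < Real.sin (Real.pi/4) := by
        apply Real.sin_lt_sin_of_lt_of_le_pi_div_two (by linarith) (by linarith) (by linarith)
      have h2 : Real.cos (Real.pi/4) ≤ Real.cos (lam/2) := by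
        apply Real.cos_le_cos_of_nonneg_of_le_pi (by linarith) (by linarith) (by linarith)
      rw [Real.sin_pi_div_four] at h1
      rw [Real.cos_pi_div_four] at h2
      linarith
    rcases hk01 with rfl | rfl
    · -- k = 0 : phi = 2 arctan X, phi/2 ∈ [0, π/2)
      have hA : Real.arctan X = phi / 2 := by push_cast at hbeta; linarith
      have hphi_lt : phi < Real.pi := by linarith
      have hc' : 0 < Real.cos (phi/2) := by
        apply Real.cos_pos_of_mem_Ioo
        constructor <;> [linarith; linarith]
      have htan : Real.tan (phi/2) = X := by rw [← hA, Real.tan_arctan]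
      have hs' : Real.sin (phi/2) = 0 := key_aux lam phi hc hsc (ne_of_gt hc') htan
      have : phi / 2 = 0 := by
        rcases (Real.sin_eq_zero_iff_of_lt_of_lt (by linarith) (by linarith)).mp hs' with h
        exact h
      linarith
    · -- k = 1 : phi = 2π + 2 arctan X, phi/2 ∈ (π/2, π)
      exfalso
      have hA : Real.arctan X = phi / 2 - Real.pi := by push_cast at hbeta; linarith
      have hphi_gt : Real.pi < phi := by linarith
      have hc' : Real.cos (phi/2) < 0 := by
        apply Real.cos_neg_of_pi_div_two_lt_of_lt (by linarith) (by linarith)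
      have htan : Real.tan (phi/2) = X := by
        rw [← Real.tan_arctan X, hA]
        exact (Real.tan_periodic.sub_eq (phi/2)).symm
      have hs' : Real.sin (phi/2) = 0 := key_aux lam phi hc hsc (ne_of_lt hc') htan
      have : 0 < Real.sin (phi/2) := Real.sin_pos_of_pos_of_lt_pi (by linarith) (by linarith)
      linarith
  · rintro rfl
    exact ⟨0, by simp [beta]⟩
end

section
/- For all λ ∈ [0, π/2) and φ ∈ [0, 2π), β(λ, φ) ≡ π (mod 2π) if and only if φ = π. -/
open Real Set

theorem beta_eq_pi_iff (lam : ℝ) (hlam : lam ∈ Set.Ico 0 (Real.pi / 2))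
    (phi : ℝ) (hphi : phi ∈ Set.Ico 0 (2 * Real.pi)) :
    Cong2Pi (beta lam phi) Real.pi ↔ phi = Real.pi := by
  obtain ⟨hl0, hl1⟩ := hlam
  obtain ⟨hp0, hp1⟩ := hphi
  have hpi := Real.pi_pos
  constructor
  · rintro ⟨k, hk⟩
    unfold beta at hk
    set x : ℝ := (Real.cos (lam / 2) * Real.sin phi) /
      (Real.sin (lam / 2) + Real.cos (lam / 2) * Real.cos phi) with hx
    set t := Real.arctan x with htdef
    have ht1 : t < π / 2 := Real.arctan_lt_pi_div_two _
    have ht2 : -(π / 2) < t := Real.neg_pi_div_two_lt_arctan _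
    have hk0 : k = 0 := by
      have h1 : (-1 : ℝ) < (k : ℝ) := by nlinarith
      have h2 : (k : ℝ) < 1 := by nlinarith
      have h1' : (-1 : ℤ) < k := by exact_mod_cast h1
      have h2' : k < 1 := by exact_mod_cast h2
      omega
    rw [hk0] at hk
    push_cast at hk
    -- hk : phi - 2 * t = π + 2 * π * 0
    have hteq : t = (phi - π) / 2 := by linarith
    -- rule out phi = 0
    rcases eq_or_lt_of_le hp0 with h0 | h0
    · exfalso
      have : t = -(π / 2) := by rw [hteq, ← h0]; ring
      linarith
    -- now phi > 0
    have hs : 0 < Real.sin (phi / 2) :=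
      Real.sin_pos_of_pos_of_lt_pi (by linarith) (by linarith)
    have htan : Real.tan t = x := Real.tan_arctan x
    have htan2 : Real.tan ((phi - π) / 2) = -Real.cos (phi / 2) / Real.sin (phi / 2) := by
      have h1 : (phi - π) / 2 = phi / 2 - π / 2 := by ring
      rw [Real.tan_eq_sin_div_cos, h1, Real.sin_sub, Real.cos_sub]
      simp
    have hxeq : x = -Real.cos (phi / 2) / Real.sin (phi / 2) := by
      rw [← htan, hteq, htan2]
    have hA : 0 < Real.cos (lam / 2) := by
      apply Real.cos_pos_of_mem_Ioo
      constructor <;> [linarith; linarith]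
    have hS : 0 ≤ Real.sin (lam / 2) := by
      apply Real.sin_nonneg_of_nonneg_of_le_pi <;> linarith
    have hsin2 : Real.sin phi = 2 * Real.sin (phi / 2) * Real.cos (phi / 2) := by
      have := Real.sin_two_mul (phi / 2)
      rw [show 2 * (phi / 2) = phi by ring] at this
      linarith
    have hcos2 : Real.cos phi = 1 - 2 * Real.sin (phi / 2) ^ 2 := by
      have h1 := Real.cos_two_mul' (phi / 2)
      rw [show 2 * (phi / 2) = phi by ring] at h1
      have h2 := Real.sin_sq_add_cos_sq (phi / 2)
      nlinarith
    have hc0 : Real.cos (phi / 2) = 0 := by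
      by_cases hD : Real.sin (lam / 2) + Real.cos (lam / 2) * Real.cos phi = 0
      · rw [hx, hD, div_zero] at hxeq
        have := hxeq.symm
        field_simp at this
        linarith [this]
      · rw [hx] at hxeq
        field_simp at hxeq
        rw [hsin2, hcos2] at hxeq
        nlinarith [hxeq, sq_nonneg (Real.sin (phi / 2))]
    -- cos (phi/2) = 0 with phi/2 ∈ (0, π) gives phi = π
    rw [Real.cos_eq_zero_iff] at hc0
    obtain ⟨n, hn⟩ := hc0
    have hn0 : n = 0 := by
      have hhalf : (0 : ℝ) < π / 2 := by linarith
      have h1 : (0 : ℝ) < (2 * (n : ℝ) + 1) * π / 2 := by rw [← hn]; linarith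
      have h2 : (2 * (n : ℝ) + 1) * π / 2 < π := by rw [← hn]; linarith
      have h1' : (0 : ℝ) < 2 * (n : ℝ) + 1 :=
        (mul_lt_mul_iff_of_pos_right hhalf).mp (by linarith : (0 : ℝ) * (π / 2) < (2 * (n : ℝ) + 1) * (π / 2))
      have h2' : 2 * (n : ℝ) + 1 < 2 :=
        (mul_lt_mul_iff_of_pos_right hhalf).mp (by linarith : (2 * (n : ℝ) + 1) * (π / 2) < 2 * (π / 2))
      have ha : (0 : ℤ) < 2 * n + 1 := by exact_mod_cast h1'
      have hb : (2 : ℤ) * n + 1 < 2 := by exact_mod_cast h2'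
      omega
    rw [hn0] at hn
    push_cast at hn
    linarith [hn]
  · intro h
    refine ⟨0, ?_⟩
    simp [beta, h]
end

section
/- Fix N ∈ ℕ with N ≥ 2, an even integer s with 1 ≤ s < N, and λ ∈ [π/2 - πs/(2N), π/2). Then the equation δ(λ, C) ≡ πs/N (mod 2π), with C ∈ (0, π), is equivalent to sin C = tan(π/2 - πs/(2N))/tan λ; in particular it has at most two solutions C⁰ = arcsin(tan(π/2 - πs/(2N))/tan λ) and C¹ = π - C⁰. -/
open Real Set

theorem delta_eq_piSN_iff (N : ℕ) (hN : 2 ≤ N) (s : ℤ) (hs_even : Even s)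
    (hs1 : 1 ≤ s) (hsN : (s : ℝ) < N)
    (lam : ℝ)
    (hlam : lam ∈ Set.Ico (Real.pi / 2 - Real.pi * s / (2 * N)) (Real.pi / 2)) :
    (∀ C ∈ Set.Ioo 0 Real.pi,
        Cong2Pi (delta lam C) (Real.pi * s / N) ↔
          Real.sin C = Real.tan (Real.pi / 2 - Real.pi * s / (2 * N)) / Real.tan lam) ∧
    (∀ C ∈ Set.Ioo 0 Real.pi,
        Cong2Pi (delta lam C) (Real.pi * s / N) →
          C = Real.arcsin (Real.tan (Real.pi / 2 - Real.pi * s / (2 * N)) / Real.tan lam) ∨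
          C = Real.pi -
            Real.arcsin (Real.tan (Real.pi / 2 - Real.pi * s / (2 * N)) / Real.tan lam)) := by
  obtain ⟨hlam1, hlam2⟩ := hlam
  have hpi := Real.pi_pos
  have hN0 : (0:ℝ) < N := by positivity
  have hs0 : (0:ℝ) < s := by exact_mod_cast hs1
  set θ : ℝ := Real.pi / 2 - Real.pi * s / (2 * N) with hθdef
  have hθ1 : 0 < θ := by
    have : Real.pi * s / (2 * N) < Real.pi / 2 := by
      rw [div_lt_div_iff₀ (by positivity) (by norm_num)]
      nlinarith
    simp only [hθdef, sub_pos]; exact this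
  have hθ2 : θ < Real.pi / 2 := by
    have : 0 < Real.pi * s / (2 * N) := by positivity
    simp only [hθdef]; linarith
  have hlam0 : 0 < lam := lt_of_lt_of_le hθ1 hlam1
  have htanl : 0 < Real.tan lam := Real.tan_pos_of_pos_of_lt_pi_div_two hlam0 hlam2
  have htanθ : 0 < Real.tan θ := Real.tan_pos_of_pos_of_lt_pi_div_two hθ1 hθ2
  have hsum : Real.pi * s / N = Real.pi - 2 * θ := by
    field_simp [hθdef]
    rw [hθdef]
    field_simp
    ring
  have key : ∀ C ∈ Set.Ioo 0 Real.pi,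
      (Cong2Pi (delta lam C) (Real.pi * s / N) ↔
        Real.sin C = Real.tan θ / Real.tan lam) := by
    intro C hC
    obtain ⟨hC0, hCπ⟩ := hC
    have hsC : 0 < Real.sin C := Real.sin_pos_of_pos_of_lt_pi hC0 hCπ
    set a : ℝ := Real.arctan (Real.sin C * Real.tan lam) with hadef
    have ha0 : 0 < a := by
      rw [hadef, ← Real.arctan_zero]
      exact Real.arctan_strictMono (by positivity)
    have ha2 : a < Real.pi / 2 := Real.arctan_lt_pi_div_two _
    constructor
    · rintro ⟨k, hk⟩
      rw [delta, ← hadef, hsum] at hk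
      have hk0 : k = 0 := by
        have h1 : -1 < (k:ℝ) ∧ (k:ℝ) < 1 := by constructor <;> nlinarith
        have : (-1:ℤ) < k ∧ k < 1 := by exact_mod_cast h1
        omega
      rw [hk0] at hk
      have haθ : a = θ := by push_cast at hk; linarith
      have htan : Real.sin C * Real.tan lam = Real.tan θ := by
        rw [← haθ, hadef, Real.tan_arctan]
      rw [eq_div_iff htanl.ne']
      exact htan
    · intro h
      have htan : Real.sin C * Real.tan lam = Real.tan θ := by
        rw [h]; field_simp
      have haθ : a = θ := by
        rw [hadef, htan, Real.arctan_tan (lt_trans (neg_lt_zero.mpr (by positivity)) hθ1) hθ2]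
      refine ⟨0, ?_⟩
      rw [delta, ← hadef, hsum, haθ]
      push_cast
      ring
  constructor
  · exact key
  · intro C hC hcong
    have h := (key C hC).mp hcong
    obtain ⟨hC0, hCπ⟩ := hC
    rw [← h]
    rcases le_or_gt C (Real.pi / 2) with hle | hlt
    · left
      rw [Real.arcsin_sin (by linarith) hle]
    · right
      rw [← Real.sin_pi_sub C, Real.arcsin_sin (by linarith) (by linarith)]
      ring
end

section
/- Let N ≥ 2, let K₀, K₁ : Fin N → Fin N be bijections, and let r₀, r₁ : Fin N → ℤ/2ℤ. Consider the 2N × 2N matrix Γ over ℤ/2ℤ whose rows correspond to the equations a_j + b_{K₀(j)} = r₀(j) and a_j + b_{K₁(j)} = r₁(j). Suppose Γ has rank 2N - 1. Then the system is inconsistent if and only if Σ_j r₀(j) ≠ Σ_j r₁(j) in ℤ/2ℤ. -/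
/-- Coefficient matrix of the system `a_j + b_{K₀ j} = r₀ j`, `a_j + b_{K₁ j} = r₁ j`:
rows indexed by `Fin N ⊕ Fin N` (first the `K₀`-equations, then the `K₁`-equations),
columns indexed by `Fin N ⊕ Fin N` (first the `a` variables, then the `b` variables). -/
def Gamma (N : ℕ) (K₀ K₁ : Fin N → Fin N) :
    Matrix (Fin N ⊕ Fin N) (Fin N ⊕ Fin N) (ZMod 2) := fun i c =>
  match i, c with
  | Sum.inl j, Sum.inl q => if q = j then 1 else 0
  | Sum.inl j, Sum.inr q => if q = K₀ j then 1 else 0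
  | Sum.inr j, Sum.inl q => if q = j then 1 else 0
  | Sum.inr j, Sum.inr q => if q = K₁ j then 1 else 0

theorem inconsistent_iff_parity (N : ℕ) (hN : 2 ≤ N)
    (K₀ K₁ : Fin N → Fin N) (hK₀ : Function.Bijective K₀) (hK₁ : Function.Bijective K₁)
    (r₀ r₁ : Fin N → ZMod 2)
    (hrank : (Gamma N K₀ K₁).rank = 2 * N - 1) :
    (¬ ∃ x : Fin N ⊕ Fin N → ZMod 2,
        (Gamma N K₀ K₁).mulVec x = Sum.elim r₀ r₁) ↔ ∑ j, r₀ j ≠ ∑ j, r₁ j := by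
  classical
  have haa : ∀ a : ZMod 2, a + a = 0 := by decide
  -- the parity functional
  let φ : (Fin N ⊕ Fin N → ZMod 2) →ₗ[ZMod 2] ZMod 2 :=
    { toFun := fun v => (∑ j, v (Sum.inl j)) + ∑ j, v (Sum.inr j)
      map_add' := by
        intro u v
        simp [Finset.sum_add_distrib]
        ring
      map_smul' := by
        intro c v
        simp [Finset.mul_sum, mul_add] }
  have hNpos : 0 < N := by omega
  -- φ is surjective
  have hv0 : φ (Pi.single (Sum.inl (⟨0, hNpos⟩ : Fin N)) 1) = 1 := by
    simp [φ, Pi.single_apply]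
  have hsurj : Function.Surjective φ := by
    intro c
    refine ⟨c • Pi.single (Sum.inl (⟨0, hNpos⟩ : Fin N)) 1, ?_⟩
    rw [map_smul, hv0]
    simp
  -- finrank of ker φ
  have hkerrank : Module.finrank (ZMod 2) (LinearMap.ker φ) = 2 * N - 1 := by
    have h1 : Module.finrank (ZMod 2) (LinearMap.range φ) = 1 := by
      rw [LinearMap.range_eq_top.mpr hsurj, finrank_top, Module.finrank_self]
    have h2 := LinearMap.finrank_range_add_finrank_ker φ
    rw [h1] at h2
    have h3 : Module.finrank (ZMod 2) (Fin N ⊕ Fin N → ZMod 2) = 2 * N := by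
      rw [Module.finrank_fintype_fun_eq_card]
      simp [Fintype.card_sum]
      omega
    omega
  -- range of mulVecLin is contained in ker φ
  have hle : LinearMap.range (Gamma N K₀ K₁).mulVecLin ≤ LinearMap.ker φ := by
    rintro v ⟨x, rfl⟩
    have h0 : ∀ j, (Gamma N K₀ K₁).mulVec x (Sum.inl j)
        = x (Sum.inl j) + x (Sum.inr (K₀ j)) := by
      intro j
      simp [Matrix.mulVec, dotProduct, Gamma, Fintype.sum_sum_type, ite_mul,
        Finset.sum_ite_eq']
    have h1 : ∀ j, (Gamma N K₀ K₁).mulVec x (Sum.inr j)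
        = x (Sum.inl j) + x (Sum.inr (K₁ j)) := by
      intro j
      simp [Matrix.mulVec, dotProduct, Gamma, Fintype.sum_sum_type, ite_mul,
        Finset.sum_ite_eq']
    have hb0 : ∑ j, x (Sum.inr (K₀ j)) = ∑ q, x (Sum.inr q) :=
      Fintype.sum_bijective K₀ hK₀ _ _ (fun j => rfl)
    have hb1 : ∑ j, x (Sum.inr (K₁ j)) = ∑ q, x (Sum.inr q) :=
      Fintype.sum_bijective K₁ hK₁ _ _ (fun j => rfl)
    have : φ ((Gamma N K₀ K₁).mulVec x) = 0 := by
      show (∑ j, (Gamma N K₀ K₁).mulVec x (Sum.inl j))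
          + ∑ j, (Gamma N K₀ K₁).mulVec x (Sum.inr j) = 0
      simp only [h0, h1, Finset.sum_add_distrib, hb0, hb1]
      have := haa ((∑ j, x (Sum.inl j)) + ∑ q, x (Sum.inr q))
      linear_combination this
    simpa [LinearMap.mem_ker] using this
  -- range = ker φ
  have heq : LinearMap.range (Gamma N K₀ K₁).mulVecLin = LinearMap.ker φ := by
    refine Submodule.eq_of_le_of_finrank_eq hle ?_
    rw [hkerrank]
    exact hrank
  -- solvability criterion
  have hsolve : (∃ x : Fin N ⊕ Fin N → ZMod 2,
      (Gamma N K₀ K₁).mulVec x = Sum.elim r₀ r₁) ↔ (∑ j, r₀ j) = ∑ j, r₁ j := by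
    constructor
    · rintro ⟨x, hx⟩
      have : Sum.elim r₀ r₁ ∈ LinearMap.range (Gamma N K₀ K₁).mulVecLin :=
        ⟨x, by simpa [Matrix.mulVecLin_apply] using hx⟩
      rw [heq, LinearMap.mem_ker] at this
      have hφ : (∑ j, r₀ j) + ∑ j, r₁ j = 0 := this
      have := haa (∑ j, r₁ j)
      linear_combination hφ - this
    · intro h
      have hmem : Sum.elim r₀ r₁ ∈ LinearMap.ker φ := by
        rw [LinearMap.mem_ker]
        show (∑ j, r₀ j) + ∑ j, r₁ j = 0
        rw [h]
        exact haa _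
      rw [← heq] at hmem
      obtain ⟨x, hx⟩ := hmem
      exact ⟨x, by simpa [Matrix.mulVecLin_apply] using hx⟩
  exact not_congr hsolve
end

section
/- Let N ∈ ℕ, N > 2, s an integer with 1 ≤ s < N, and λ ∈ (π/2 - πs/(2N), π/2). Set C⁰(λ) = arcsin(tan(π/2 - πs/(2N))/tan λ). Then the function λ ↦ β(λ, C⁰(λ)) is strictly monotone (in fact strictly increasing) on (π/2 - πs/(2N), π/2), where β(λ, φ) = φ - 2·arctan((cos(λ/2)·sin φ)/(sin(λ/2) + cos(λ/2)·cos φ)). -/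
open Real Set

private lemma aux_ne {x : ℝ} (h1 : -(π/2) < x) (h2 : x < π/2) :
    ∀ k : ℤ, x ≠ (2 * k + 1) * π / 2 := by
  rw [← Real.cos_ne_zero_iff]
  exact ne_of_gt (Real.cos_pos_of_mem_Ioo ⟨h1, h2⟩)

private lemma beta_eq {lam phi : ℝ} (hl0 : 0 < lam) (hl1 : lam < π/2)
    (hp0 : 0 < phi) (hp1 : phi < π/2) :
    beta lam phi = -2 * arctan (tan (π/4 - lam/2) * tan (phi/2)) := by
  have hpi := Real.pi_pos
  set c := Real.cos (lam/2) with hc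
  set d := Real.sin (lam/2) with hd
  have hc0 : 0 < c := Real.cos_pos_of_mem_Ioo ⟨by linarith, by linarith⟩
  have hd0 : 0 < d := Real.sin_pos_of_pos_of_lt_pi (by linarith) (by linarith)
  set S := Real.sin (phi/2) with hS
  set Co := Real.cos (phi/2) with hCo
  have hS0 : 0 < S := Real.sin_pos_of_pos_of_lt_pi (by linarith) (by linarith)
  have hCo0 : 0 < Co := Real.cos_pos_of_mem_Ioo ⟨by linarith, by linarith⟩
  set T := Real.tan (phi/2) with hTdef
  set t := Real.tan (π/4 - lam/2) with htdef
  have hT : T = S / Co := Real.tan_eq_sin_div_cos _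
  have hT0 : 0 < T := Real.tan_pos_of_pos_of_lt_pi_div_two (by linarith) (by linarith)
  have hT1 : T < 1 := by
    rw [hTdef, ← Real.tan_pi_div_four]
    exact Real.tan_lt_tan_of_lt_of_lt_pi_div_two (by linarith) (by linarith) (by linarith)
  have ht0 : 0 < t := Real.tan_pos_of_pos_of_lt_pi_div_two (by linarith) (by linarith)
  have ht1 : t < 1 := by
    rw [htdef, ← Real.tan_pi_div_four]
    exact Real.tan_lt_tan_of_lt_of_lt_pi_div_two (by linarith) (by linarith) (by linarith)
  have ht : t = (c - d) / (c + d) := by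
    rw [htdef, Real.tan_eq_sin_div_cos, Real.sin_sub, Real.cos_sub,
      Real.sin_pi_div_four, Real.cos_pi_div_four, ← hc, ← hd]
    have h2 : (0:ℝ) < Real.sqrt 2 := by positivity
    rw [div_eq_div_iff (by nlinarith) (by nlinarith)]
    ring
  have hφs : Real.sin phi = 2 * S * Co := by
    rw [show phi = 2 * (phi/2) by ring, Real.sin_two_mul]
  have hφc : Real.cos phi = 2 * Co ^ 2 - 1 := by
    rw [show phi = 2 * (phi/2) by ring, Real.cos_two_mul]
  have hpyth : S ^ 2 + Co ^ 2 = 1 := Real.sin_sq_add_cos_sq _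
  have hcphi : 0 < Real.cos phi := Real.cos_pos_of_mem_Ioo ⟨by linarith, hp1⟩
  clear_value c d S Co T t
  have hden : 0 < d + c * Real.cos phi := by positivity
  have harct0 : 0 < arctan (t * T) := by
    have h := Real.arctan_strictMono (show (0:ℝ) < t * T by positivity)
    rwa [Real.arctan_zero] at h
  have harct1 : arctan (t * T) < phi / 2 := by
    calc arctan (t * T) < arctan T := Real.arctan_strictMono (by nlinarith)
      _ = phi / 2 := by rw [hTdef]; exact Real.arctan_tan (by linarith) (by linarith)
  have key : arctan ((c * Real.sin phi) / (d + c * Real.cos phi))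
      = phi / 2 + arctan (t * T) := by
    rw [← Real.arctan_tan (x := phi/2 + arctan (t*T)) (by linarith) (by linarith)]
    congr 1
    rw [Real.tan_add' ⟨aux_ne (by linarith) (by linarith),
      aux_ne (Real.neg_pi_div_two_lt_arctan _) (Real.arctan_lt_pi_div_two _)⟩,
      Real.tan_arctan, ← hTdef]
    have hB : 0 < 1 - T * (t * T) := by nlinarith [mul_pos hT0 hT0]
    have hcd : (0:ℝ) < c + d := by linarith
    have e1 : T + t * T = 2 * c * S / ((c + d) * Co) := by
      rw [hT, ht]; field_simp; ring
    have e3 : (c + d) * Co ^ 2 - (c - d) * S ^ 2 = d + c * Real.cos phi := by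
      rw [hφc]; linear_combination (d - c) * hpyth
    have e2 : 1 - T * (t * T) = (d + c * Real.cos phi) / ((c + d) * Co ^ 2) := by
      rw [← e3, hT, ht]; field_simp
    rw [hφs, e1, e2]
    field_simp
  rw [show beta lam phi = phi - 2 * arctan ((c * Real.sin phi) / (d + c * Real.cos phi)) by
    unfold beta; rw [← hc, ← hd], key]
  ring

theorem beta_C0_strictMono (N : ℕ) (hN : 2 < N) (s : ℤ) (hs1 : 1 ≤ s) (hsN : (s : ℝ) < N) :
    StrictMonoOn
      (fun lam : ℝ =>
        beta lam (Real.arcsin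
          (Real.tan (Real.pi / 2 - Real.pi * s / (2 * N)) / Real.tan lam)))
      (Set.Ioo (Real.pi / 2 - Real.pi * s / (2 * N)) (Real.pi / 2)) := by
  have hpi := Real.pi_pos
  set a := Real.pi / 2 - Real.pi * s / (2 * N) with ha
  clear_value a
  have hN0 : (0:ℝ) < N := by exact_mod_cast (Nat.zero_lt_of_lt hN)
  have hs0 : (1:ℝ) ≤ s := by exact_mod_cast hs1
  have ha1 : a < π / 2 := by
    have : 0 < Real.pi * s / (2 * N) := by positivity
    linarith
  have ha0 : 0 < a := by
    have : Real.pi * s / (2 * N) < π / 2 := by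
      rw [div_lt_div_iff₀ (by positivity) (by norm_num)]
      nlinarith
    linarith
  have hta : 0 < Real.tan a := Real.tan_pos_of_pos_of_lt_pi_div_two ha0 ha1
  have htlt : ∀ z : ℝ, a < z → z < π/2 → Real.tan a < Real.tan z := fun z h1 h2 =>
    Real.tan_lt_tan_of_lt_of_lt_pi_div_two (by linarith) h2 h1
  intro x hx y hy hxy
  obtain ⟨hax, hx2⟩ := hx
  obtain ⟨hay, hy2⟩ := hy
  have hx0 : 0 < x := ha0.trans hax
  have hy0 : 0 < y := ha0.trans hay
  have htx : Real.tan a < Real.tan x := htlt x hax hx2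
  have hty : Real.tan a < Real.tan y := htlt y hay hy2
  have htx0 : 0 < Real.tan x := hta.trans htx
  have hty0 : 0 < Real.tan y := hta.trans hty
  have hrx0 : 0 < Real.tan a / Real.tan x := div_pos hta htx0
  have hry0 : 0 < Real.tan a / Real.tan y := div_pos hta hty0
  have hrx1 : Real.tan a / Real.tan x < 1 := (div_lt_one htx0).2 htx
  have hry1 : Real.tan a / Real.tan y < 1 := (div_lt_one hty0).2 hty
  set px := Real.arcsin (Real.tan a / Real.tan x) with hpx
  set py := Real.arcsin (Real.tan a / Real.tan y) with hpy
  have hpx0 : 0 < px := Real.arcsin_pos.2 hrx0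
  have hpy0 : 0 < py := Real.arcsin_pos.2 hry0
  have hpx1 : px < π / 2 := Real.arcsin_lt_pi_div_two.2 hrx1
  have hpy1 : py < π / 2 := Real.arcsin_lt_pi_div_two.2 hry1
  show beta x px < beta y py
  rw [beta_eq hx0 hx2 hpx0 hpx1, beta_eq hy0 hy2 hpy0 hpy1]
  have hmono : Real.tan (π/4 - y/2) * Real.tan (py/2)
      < Real.tan (π/4 - x/2) * Real.tan (px/2) := by
    have h1 : Real.tan (π/4 - y/2) < Real.tan (π/4 - x/2) :=
      Real.tan_lt_tan_of_lt_of_lt_pi_div_two (by linarith) (by linarith) (by linarith)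
    have hpylt : py < px := by
      have hr : Real.tan a / Real.tan y < Real.tan a / Real.tan x :=
        div_lt_div_of_pos_left hta htx0 (htlt y ((hax.trans hxy)) hy2 |>.trans_le (le_refl _) |> fun _ => Real.tan_lt_tan_of_lt_of_lt_pi_div_two (by linarith) hy2 hxy)
      exact Real.strictMonoOn_arcsin ⟨by linarith, by linarith⟩ ⟨by linarith, by linarith⟩ hr
    have h2 : Real.tan (py/2) < Real.tan (px/2) :=
      Real.tan_lt_tan_of_lt_of_lt_pi_div_two (by linarith) (by linarith) (by linarith)
    have h3 : 0 ≤ Real.tan (π/4 - y/2) :=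
      (Real.tan_pos_of_pos_of_lt_pi_div_two (by linarith) (by linarith)).le
    have h4 : 0 ≤ Real.tan (py/2) :=
      (Real.tan_pos_of_pos_of_lt_pi_div_two (by linarith) (by linarith)).le
    exact mul_lt_mul'' h1 h2 h3 h4
  have := Real.arctan_strictMono hmono
  linarith
end
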